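/- arXiv:math/0605362 — 4 statements merged into one kernel-verified Lean document; each statement's English description precedes it below -/
import Mathlib

section
/- Let L be an even lattice, H ∈ L primitive with H² = 8, and h₁ ∈ L with h₁² = ±4, H·h₁ ≡ 0 mod 2, and such that the ideal {H·x : x ∈ S} = ℤ, where S is the primitive closure in L of the sublattice generated by H and h₁. Then h₁ − H ∈ 2S; i.e., there exists D ∈ S with h₁ = H + 2D. -/
/-- The primitive closure `(M ⊗ ℚ) ∩ L` of a sublattice `M` of a lattice `L`:
all elements of `L` a nonzero multiple of which lies in `M`. -/
def primClosure {L : Type*} [AddCommGroup L] [Module ℤ L] (M : Submodule ℤ L) : Set L :=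
  {x : L | ∃ n : ℤ, n ≠ 0 ∧ n • x ∈ M}

private lemma zsmul_mem' {L : Type*} [AddCommGroup L] [Module ℤ L] {M : Submodule ℤ L}
    {x : L} (h : x ∈ M) (n : ℤ) : n • x ∈ M := by
  simp only [← Int.cast_smul_eq_zsmul ℤ, Int.cast_id]
  exact M.smul_mem n h

private lemma zsmul_cancel {L : Type*} [AddCommGroup L] [Module ℤ L] [Module.Free ℤ L]
    {n : ℤ} (hn : n ≠ 0) {u v : L} (h : n • u = n • v) : u = v := by
  simp only [← Int.cast_smul_eq_zsmul ℤ, Int.cast_id] at h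
  exact smul_right_injective L hn h

/-- In an even lattice, if `H` is primitive with `H² = 8`, `h₁² = ±4`,
`H·h₁ ≡ 0 mod 2`, and the ideal `{H·x : x ∈ S} = ℤ` where `S` is the primitive closure
of `ℤH + ℤh₁`, then `h₁ − H ∈ 2S`, i.e. `h₁ = H + 2D` for some `D ∈ S`. -/
theorem exists_D_in_primClosure
    {L : Type*} [AddCommGroup L] [Module ℤ L] [Module.Free ℤ L] [Module.Finite ℤ L]
    (B : L →ₗ[ℤ] L →ₗ[ℤ] ℤ)
    (hsym : ∀ x y : L, B x y = B y x)
    (heven : ∀ x : L, 2 ∣ B x x)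
    (H h₁ : L) (hH : B H H = 8)
    (hprim : ∀ (n : ℤ) (x : L), H = n • x → IsUnit n)
    (hsq : B h₁ h₁ = 4 ∨ B h₁ h₁ = -4)
    (hpar : 2 ∣ B H h₁)
    (hideal : Ideal.span {z : ℤ | ∃ x ∈ primClosure (Submodule.span ℤ ({H, h₁} : Set L)),
        z = B H x} = ⊤) :
    ∃ D ∈ primClosure (Submodule.span ℤ ({H, h₁} : Set L)), h₁ = H + 2 • D := by
  classical
  set M : Submodule ℤ L := Submodule.span ℤ ({H, h₁} : Set L) with hM
  have hMH : H ∈ M := Submodule.subset_span (by simp)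
  have hMh : h₁ ∈ M := Submodule.subset_span (by simp)
  -- find x in the primitive closure with B H x = 1
  have h1mem : (1 : ℤ) ∈ Ideal.span {z : ℤ | ∃ x ∈ primClosure M, z = B H x} := by
    rw [hideal]; trivial
  have hex : ∃ x ∈ primClosure M, B H x = 1 := by
    have main : ∀ z ∈ Ideal.span {z : ℤ | ∃ x ∈ primClosure M, z = B H x},
        ∃ x ∈ primClosure M, B H x = z := by
      intro z hz
      induction hz using Submodule.span_induction with
      | mem z hz => obtain ⟨x, hx, hzx⟩ := hz; exact ⟨x, hx, hzx.symm⟩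
      | zero => exact ⟨0, ⟨1, one_ne_zero, by rw [one_zsmul]; exact M.zero_mem⟩, by simp⟩
      | add u v hu hv ihu ihv =>
        obtain ⟨x, ⟨n, hn, hnM⟩, hx⟩ := ihu
        obtain ⟨y, ⟨k, hk, hkM⟩, hy⟩ := ihv
        refine ⟨x + y, ⟨n * k, mul_ne_zero hn hk, ?_⟩, by rw [map_add, hx, hy]⟩
        have e : (n * k) • (x + y) = k • (n • x) + n • (k • y) := by
          have e1 : (n * k) • x = k • (n • x) := by rw [mul_comm, mul_zsmul]
          have e2 : (n * k) • y = n • (k • y) := mul_zsmul y n k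
          rw [zsmul_add, e1, e2]
        rw [e]
        exact M.add_mem (zsmul_mem' hnM k) (zsmul_mem' hkM n)
      | smul r u hu ihu =>
        obtain ⟨x, ⟨n, hn, hnM⟩, hx⟩ := ihu
        refine ⟨r • x, ⟨n, hn, ?_⟩, ?_⟩
        · have e : n • (r • x) = r • (n • x) := by
            rw [← mul_zsmul, mul_comm, mul_zsmul]
          rw [e]
          exact zsmul_mem' hnM r
        · rw [map_zsmul, hx]
    exact main 1 h1mem
  obtain ⟨x, hxS, hBx⟩ := hex
  obtain ⟨c', hc'⟩ := hpar
  have key : ∀ N : ℕ, ∀ n a b : ℤ, n.natAbs ≤ N → n ≠ 0 →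
      a • H + b • h₁ = n • x → ∃ D ∈ primClosure M, h₁ = H + 2 • D := by
    intro N
    induction N with
    | zero =>
      intro n a b hle hn _
      exact absurd (Int.natAbs_eq_zero.mp (Nat.le_zero.mp hle)) hn
    | succ N ih =>
      intro n a b hle hn heq
      have hn8 : n = 8 * a + b * B H h₁ := by
        have h := congrArg (B H) heq
        simp only [map_add, map_zsmul, zsmul_eq_mul, Int.cast_id, hH, hBx, mul_one] at h
        linarith
      obtain ⟨m, hneven⟩ : ∃ m : ℤ, n = 2 * m := ⟨4 * a + b * c', by rw [hn8, hc']; ring⟩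
      rcases Int.even_or_odd a with ⟨a₁, ha⟩ | ⟨a₁, ha⟩
      · rcases Int.even_or_odd b with ⟨b₁, hb⟩ | ⟨b₁, hb⟩
        · -- a, b both even: divide the relation by 2 and recurse
          have hm0 : m ≠ 0 := fun h => hn (by rw [hneven, h, mul_zero])
          have h2 : (2 : ℤ) • (a₁ • H + b₁ • h₁) = (2 : ℤ) • (m • x) := by
            have e1 : (2 : ℤ) • (a₁ • H + b₁ • h₁) = (a₁ + a₁) • H + (b₁ + b₁) • h₁ := by
              rw [two_zsmul, add_zsmul, add_zsmul]; abel
            have e2 : (2 : ℤ) • (m • x) = (2 * m) • x := (mul_zsmul x 2 m).symm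
            rw [e1, e2, ← ha, ← hb, ← hneven]; exact heq
          have heq' : a₁ • H + b₁ • h₁ = m • x := zsmul_cancel two_ne_zero h2
          refine ih m a₁ b₁ ?_ hm0 heq'
          have h1 : n.natAbs = 2 * m.natAbs := by
            rw [hneven, Int.natAbs_mul]; rfl
          have h2' : m.natAbs ≠ 0 := fun h => hm0 (Int.natAbs_eq_zero.mp h)
          omega
        · -- a even, b odd: then h₁ is divisible by 2, contradicting h₁² = ±4
          rw [ha, hb, hneven] at heq
          have hy : h₁ = (2 : ℤ) • (m • x - a₁ • H - b₁ • h₁) := by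
            simp only [← Int.cast_smul_eq_zsmul ℤ, Int.cast_id] at heq ⊢
            linear_combination (norm := module) heq
          set y := m • x - a₁ • H - b₁ • h₁ with hyd
          obtain ⟨t, ht⟩ := heven y
          have e1 : ∀ z : L, B z h₁ = 2 * B z y := by
            intro z
            rw [hy, map_zsmul, zsmul_eq_mul, Int.cast_id]
          have e2 : B h₁ h₁ = 8 * t := by
            rw [e1 h₁, hsym h₁ y, e1 y, ht]; ring
          rcases hsq with h | h <;> omega
      · rcases Int.even_or_odd b with ⟨b₁, hb⟩ | ⟨b₁, hb⟩
        · -- a odd, b even: then H is divisible by 2, contradicting primitivity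
          rw [ha, hb, hneven] at heq
          have hw : H = (2 : ℤ) • (m • x - a₁ • H - b₁ • h₁) := by
            simp only [← Int.cast_smul_eq_zsmul ℤ, Int.cast_id] at heq ⊢
            linear_combination (norm := module) heq
          have := hprim 2 _ hw
          rw [Int.isUnit_iff] at this
          omega
        · -- a, b both odd
          rw [ha, hb, hneven] at heq
          refine ⟨m • x - a₁ • H - b₁ • h₁ - H, ⟨2, two_ne_zero, ?_⟩, ?_⟩
          · have h2D : (2 : ℤ) • (m • x - a₁ • H - b₁ • h₁ - H) = h₁ - H := by
              simp only [← Int.cast_smul_eq_zsmul ℤ, Int.cast_id] at heq ⊢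
              linear_combination (norm := module) -heq
            rw [h2D]
            exact M.sub_mem hMh hMH
          · have h2D : (2 : ℤ) • (m • x - a₁ • H - b₁ • h₁ - H) = h₁ - H := by
              simp only [← Int.cast_smul_eq_zsmul ℤ, Int.cast_id] at heq ⊢
              linear_combination (norm := module) -heq
            rw [two_nsmul, ← two_zsmul, h2D]
            abel
  obtain ⟨n0, hn0, hn0M⟩ := hxS
  obtain ⟨a0, b0, hab0⟩ := Submodule.mem_span_pair.mp hn0M
  have hab0' : a0 • H + b0 • h₁ = n0 • x := by
    simpa only [← Int.cast_smul_eq_zsmul ℤ, Int.cast_id] using hab0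
  exact key n0.natAbs n0 a0 b0 le_rfl hn0 hab0'
end

section
/- Let L be an even lattice and H ∈ L primitive with H² = 8. Then the following are equivalent: (1) there exists h₁ ∈ L with h₁² = ±4, H·h₁ ≡ 0 mod 2, and H·S = ℤ where S is the primitive closure of ℤH + ℤh₁ in L; (2) there exists D ∈ L with (H + 2D)² = ±4. Moreover the correspondence is given by h₁ = H + 2D. -/
theorem Int.exists_odd_mem_of_span_eq_top {s : Set ℤ} (hs : Ideal.span s = ⊤) :
    ∃ z ∈ s, Odd z := by
  by_contra! h
  have hle : Ideal.span s ≤ Ideal.span {2} :=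
    Ideal.span_le.mpr fun z hz ↦
      Ideal.mem_span_singleton.mpr (even_iff_two_dvd.mp (Int.not_odd_iff_even.mp (h z hz)))
  rw [hs, top_le_iff, Ideal.span_singleton_eq_top] at hle
  exact absurd (Int.isUnit_iff.mp hle) (by omega)

theorem Ideal.span_eq_top_of_isCoprime {R : Type*} [CommSemiring R] {s : Set R} {a b : R}
    (hab : IsCoprime a b) (ha : a ∈ s) (hb : b ∈ s) : Ideal.span s = ⊤ := by
  obtain ⟨u, v, huv⟩ := hab
  rw [Ideal.eq_top_iff_one, ← huv]
  exact add_mem (Ideal.mul_mem_left _ u (Ideal.subset_span ha))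
    (Ideal.mul_mem_left _ v (Ideal.subset_span hb))

section TorsionFree

variable {G : Type*} [AddCommGroup G]

theorem exists_add_zsmul_eq_two_nsmul_of_odd {a b z : G} {p q r : ℤ} (hp : Odd p)
    (hqr : Even (q - r)) (h : p • a + q • b = 2 • z) : ∃ y, a + r • b = 2 • y := by
  obtain ⟨k, rfl⟩ := hp
  obtain ⟨j, hj⟩ := hqr
  refine ⟨z - k • a - j • b, ?_⟩
  rw [show r = q - (j + j) by omega, nsmul_sub, nsmul_sub, ← h]
  simp only [two_nsmul, add_zsmul, sub_zsmul, one_zsmul, two_mul]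
  abel

variable [IsAddTorsionFree G]

theorem exists_zsmul_eq_add_zsmul_not_all_even {x a b : G} {n p q : ℤ} (hn : n ≠ 0)
    (h : n • x = p • a + q • b) :
    ∃ n' p' q' : ℤ, n' ≠ 0 ∧ n' • x = p' • a + q' • b ∧ ¬(Even n' ∧ Even p' ∧ Even q') := by
  induction hN : n.natAbs using Nat.strong_induction_on generalizing n p q with
  | _ N ih =>
  by_cases hall : Even n ∧ Even p ∧ Even q
  · obtain ⟨⟨n, rfl⟩, ⟨p, rfl⟩, ⟨q, rfl⟩⟩ := hall
    refine ih n.natAbs (by omega) (p := p) (q := q) (by omega)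
      (zsmul_right_injective two_ne_zero ?_) rfl
    simpa only [two_zsmul, ← add_zsmul, smul_add, add_add_add_comm] using h
  · exact ⟨n, p, q, hn, h, hall⟩

end TorsionFree

section EvenForm

variable {L : Type*} [AddCommGroup L] [Module ℤ L] {B : L →ₗ[ℤ] L →ₗ[ℤ] ℤ}

theorem apply_zsmul_add_zsmul_self (hsym : ∀ x y : L, B x y = B y x) (p q : ℤ) (a b : L) :
    B (p • a + q • b) (p • a + q • b) = p ^ 2 * B a a + 2 * p * q * B a b + q ^ 2 * B b b := by
  simp only [map_add, map_zsmul, LinearMap.add_apply, LinearMap.smul_apply, smul_eq_mul, hsym b a]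
  ring

theorem odd_apply_of_apply_add_two_nsmul_self (hsym : ∀ x y : L, B x y = B y x)
    (heven : ∀ x : L, 2 ∣ B x x) {a d : L} (ha : 8 ∣ B a a)
    (h : B (a + 2 • d) (a + 2 • d) ≡ 4 [ZMOD 8]) : Odd (B a d) := by
  have hexp := apply_zsmul_add_zsmul_self hsym 1 2 a d
  rw [one_zsmul, two_zsmul, ← two_nsmul] at hexp
  obtain ⟨c, hc⟩ := heven d
  rw [Int.ModEq, hexp, hc] at h
  rw [Int.odd_iff]
  omega

theorem even_of_zsmul_add_zsmul_eq_two_nsmul (hsym : ∀ x y : L, B x y = B y x)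
    (heven : ∀ x : L, 2 ∣ B x x) {a b z : L} {p q : ℤ} (ha : 8 ∣ B a a)
    (hb : B b b ≡ 4 [ZMOD 8]) (hab : 2 ∣ B a b) (h : p • a + q • b = 2 • z) (hp : Even p) :
    Even q := by
  obtain ⟨k, rfl⟩ := hp
  obtain ⟨u, hu⟩ := ha
  obtain ⟨v, hv⟩ := hab
  obtain ⟨c, hc⟩ := heven z
  have hsq := apply_zsmul_add_zsmul_self hsym (k + k) q a b
  rw [h, hu, hv] at hsq
  simp only [map_nsmul, LinearMap.smul_apply, nsmul_eq_mul, Nat.cast_ofNat, hc] at hsq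
  obtain ⟨t, ht⟩ : ∃ t, B b b = 8 * t + 4 := ⟨B b b / 8, by rw [Int.ModEq] at hb; omega⟩
  by_contra hq
  obtain ⟨j, rfl⟩ := Int.not_even_iff_odd.mp hq
  -- `(2z)² = 4z² ≡ 0`, but for `p` even and `q` odd the left side is `≡ q²·b² ≡ 4 (mod 8)`
  have : (4 : ℤ) =
      8 * (c - 4 * k ^ 2 * u - k * (2 * j + 1) * v - t * (2 * j + 1) ^ 2 - 2 * (j ^ 2 + j)) := by
    linear_combination -hsq - (2 * j + 1) ^ 2 * ht
  omega

end EvenForm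

section PrimitiveClosure

variable {L : Type*} [AddCommGroup L] [Module ℤ L]

theorem mem_span_pair_iff_exists_zsmul {a b x : L} :
    x ∈ Submodule.span ℤ ({a, b} : Set L) ↔ ∃ p q : ℤ, p • a + q • b = x := by
  simp only [Submodule.mem_span_pair, ← Int.cast_smul_eq_zsmul ℤ, Int.cast_id]

theorem mem_primClosure_of_mem {M : Submodule ℤ L} {x : L} (hx : x ∈ M) : x ∈ primClosure M :=
  ⟨1, one_ne_zero, by rwa [one_zsmul]⟩

theorem mem_primClosure_span_add_two_nsmul (a d : L) :
    d ∈ primClosure (Submodule.span ℤ ({a, a + 2 • d} : Set L)) := by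
  refine ⟨2, two_ne_zero, ?_⟩
  rw [two_zsmul, ← two_nsmul, ← add_sub_cancel_left a (2 • d)]
  exact sub_mem (Submodule.subset_span (by simp)) (Submodule.subset_span (by simp))

end PrimitiveClosure

section MainLemma

variable {L : Type*} [AddCommGroup L] [Module ℤ L] {B : L →ₗ[ℤ] L →ₗ[ℤ] ℤ}

theorem span_apply_primClosure_eq_top_of_isCoprime {a d : L} (h : IsCoprime (B a a) (B a d)) :
    Ideal.span {z : ℤ | ∃ x ∈ primClosure (Submodule.span ℤ ({a, a + 2 • d} : Set L)),
      z = B a x} = ⊤ :=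
  Ideal.span_eq_top_of_isCoprime h
    ⟨a, mem_primClosure_of_mem (Submodule.subset_span (by simp)), rfl⟩
    ⟨d, mem_primClosure_span_add_two_nsmul a d, rfl⟩

theorem dvd_and_span_eq_top_of_apply_add_two_nsmul_self (hsym : ∀ x y : L, B x y = B y x)
    (heven : ∀ x : L, 2 ∣ B x x) {H D : L} (hH : B H H = 8)
    (hD : B (H + 2 • D) (H + 2 • D) ≡ 4 [ZMOD 8]) :
    2 ∣ B H (H + 2 • D) ∧
      Ideal.span {z : ℤ | ∃ x ∈ primClosure (Submodule.span ℤ ({H, H + 2 • D} : Set L)),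
        z = B H x} = ⊤ := by
  have hodd := odd_apply_of_apply_add_two_nsmul_self hsym heven (hH ▸ dvd_rfl) hD
  refine ⟨⟨4 + B H D, by simp only [two_nsmul, map_add, hH]; ring⟩, ?_⟩
  refine span_apply_primClosure_eq_top_of_isCoprime ?_
  rw [hH, show (8 : ℤ) = 2 ^ 3 by norm_num]
  exact (Int.isCoprime_two_left.mpr hodd).pow_left

theorem even_of_zsmul_eq_add_zsmul (f : L →ₗ[ℤ] ℤ) {x a b : L} {n p q : ℤ}
    (h : n • x = p • a + q • b) (ha : Even (f a)) (hb : Even (f b)) (hx : Odd (f x)) :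
    Even n := by
  have hf := congrArg f h
  simp only [map_add, map_zsmul, smul_eq_mul] at hf
  have : Even (n * f x) := hf ▸ (ha.mul_left p).add (hb.mul_left q)
  exact (Int.even_mul.mp this).resolve_right (Int.not_even_iff_odd.mpr hx)

theorem exists_mem_primClosure_eq_add_two_nsmul [IsAddTorsionFree L]
    (hsym : ∀ x y : L, B x y = B y x) (heven : ∀ x : L, 2 ∣ B x x) {H h₁ : L}
    (hH : 8 ∣ B H H) (hH₂ : ∀ y, H ≠ 2 • y) (hs : B h₁ h₁ ≡ 4 [ZMOD 8]) (hdvd : 2 ∣ B H h₁)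
    (hid : Ideal.span {z : ℤ | ∃ x ∈ primClosure (Submodule.span ℤ ({H, h₁} : Set L)),
      z = B H x} = ⊤) :
    ∃ D ∈ primClosure (Submodule.span ℤ ({H, h₁} : Set L)), h₁ = H + 2 • D := by
  suffices ∃ D, h₁ = H + 2 • D by
    obtain ⟨D, rfl⟩ := this
    exact ⟨D, mem_primClosure_span_add_two_nsmul H D, rfl⟩
  obtain ⟨_, ⟨x, ⟨n, hn, hnx⟩, rfl⟩, hodd⟩ := Int.exists_odd_mem_of_span_eq_top hid
  obtain ⟨p, q, hpq⟩ := mem_span_pair_iff_exists_zsmul.mp hnx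
  obtain ⟨n, p, q, hn, hrel, hnot⟩ := exists_zsmul_eq_add_zsmul_not_all_even hn hpq.symm
  obtain ⟨w, rfl⟩ := even_of_zsmul_eq_add_zsmul (B H) hrel
    (even_iff_two_dvd.mpr ((by norm_num : (2 : ℤ) ∣ 8).trans hH)) (even_iff_two_dvd.mpr hdvd)
    hodd
  have h₂ : p • H + q • h₁ = 2 • (w • x) := by rw [← hrel, two_nsmul, add_zsmul]
  have hp : Odd p := by
    by_contra hp
    rw [Int.not_odd_iff_even] at hp
    exact hnot ⟨⟨w, rfl⟩, hp, even_of_zsmul_add_zsmul_eq_two_nsmul hsym heven hH hs hdvd h₂ hp⟩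
  obtain hq | hq := Int.even_or_odd q
  · obtain ⟨y, hy⟩ := exists_add_zsmul_eq_two_nsmul_of_odd hp (r := 0) (by simpa using hq) h₂
    exact absurd (by simpa using hy) (hH₂ y)
  · obtain ⟨y, hy⟩ :=
      exists_add_zsmul_eq_two_nsmul_of_odd hp (r := 1) (by simpa [Int.even_sub_one] using hq) h₂
    refine ⟨y - H, ?_⟩
    rw [nsmul_sub, ← hy, one_zsmul, two_nsmul]
    abel

end MainLemma

theorem main_lemma_equivalence_general
    {L : Type*} [AddCommGroup L] [Module ℤ L] [Module.Free ℤ L]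
    (B : L →ₗ[ℤ] L →ₗ[ℤ] ℤ)
    (hsym : ∀ x y : L, B x y = B y x)
    (heven : ∀ x : L, 2 ∣ B x x)
    (H : L) (hH : B H H = 8)
    (hprim : ∀ (n : ℤ) (x : L), H = n • x → IsUnit n) :
    ((∃ h₁ : L, (B h₁ h₁ = 4 ∨ B h₁ h₁ = -4) ∧ 2 ∣ B H h₁ ∧
        Ideal.span {z : ℤ | ∃ x ∈ primClosure (Submodule.span ℤ ({H, h₁} : Set L)),
          z = B H x} = ⊤) ↔
      (∃ D : L, B (H + 2 • D) (H + 2 • D) = 4 ∨ B (H + 2 • D) (H + 2 • D) = -4)) ∧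
    (∀ D : L, (B (H + 2 • D) (H + 2 • D) = 4 ∨ B (H + 2 • D) (H + 2 • D) = -4) →
      (B (H + 2 • D) (H + 2 • D) = 4 ∨ B (H + 2 • D) (H + 2 • D) = -4) ∧
        2 ∣ B H (H + 2 • D) ∧
        Ideal.span {z : ℤ | ∃ x ∈ primClosure
            (Submodule.span ℤ ({H, H + 2 • D} : Set L)), z = B H x} = ⊤) ∧
    (∀ h₁ : L, (B h₁ h₁ = 4 ∨ B h₁ h₁ = -4) → 2 ∣ B H h₁ →
      Ideal.span {z : ℤ | ∃ x ∈ primClosure (Submodule.span ℤ ({H, h₁} : Set L)),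
        z = B H x} = ⊤ →
      ∃ D ∈ primClosure (Submodule.span ℤ ({H, h₁} : Set L)), h₁ = H + 2 • D) := by
  have : IsAddTorsionFree L := .of_isTorsionFree ℤ L
  have hH₂ : ∀ y, H ≠ 2 • y := fun y hy ↦
    absurd (hprim 2 y (by rwa [two_zsmul, ← two_nsmul])) (by decide)
  have hmod : ∀ y : L, B y y = 4 ∨ B y y = -4 → B y y ≡ 4 [ZMOD 8] := by
    rintro y (h | h) <;> simp [h, Int.ModEq]
  have from_D := fun (D : L) hD ↦
    dvd_and_span_eq_top_of_apply_add_two_nsmul_self hsym heven hH (hmod (H + 2 • D) hD)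
  have to_D := fun (h₁ : L) hs ↦
    exists_mem_primClosure_eq_add_two_nsmul hsym heven (hH ▸ dvd_rfl) hH₂ (hmod h₁ hs)
  refine ⟨⟨fun ⟨h₁, hs, hdvd, hid⟩ ↦ ?_, fun ⟨D, hD⟩ ↦ ⟨H + 2 • D, hD, from_D D hD⟩⟩,
    fun D hD ↦ ⟨hD, from_D D hD⟩, to_D⟩
  obtain ⟨D, -, rfl⟩ := to_D h₁ hs hdvd hid
  exact ⟨D, hs⟩

/-- Main Lemma of Madonna–Nikulin III: for an even lattice `L` and primitive
`H ∈ L` with `H² = 8`, the existence of `h₁` with `h₁² = ±4`, `H·h₁ ≡ 0 mod 2` and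
`H·S = ℤ` (`S` the primitive closure of `ℤH + ℤh₁`) is equivalent to the existence of
`D ∈ L` with `(H + 2D)² = ±4`; the correspondence is `h₁ = H + 2D`. -/
theorem main_lemma_equivalence
    {L : Type*} [AddCommGroup L] [Module ℤ L] [Module.Free ℤ L] [Module.Finite ℤ L]
    (B : L →ₗ[ℤ] L →ₗ[ℤ] ℤ)
    (hsym : ∀ x y : L, B x y = B y x)
    (heven : ∀ x : L, 2 ∣ B x x)
    (H : L) (hH : B H H = 8)
    (hprim : ∀ (n : ℤ) (x : L), H = n • x → IsUnit n) :
    ((∃ h₁ : L, (B h₁ h₁ = 4 ∨ B h₁ h₁ = -4) ∧ 2 ∣ B H h₁ ∧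
        Ideal.span {z : ℤ | ∃ x ∈ primClosure (Submodule.span ℤ ({H, h₁} : Set L)),
          z = B H x} = ⊤) ↔
      (∃ D : L, B (H + 2 • D) (H + 2 • D) = 4 ∨ B (H + 2 • D) (H + 2 • D) = -4)) ∧
    (∀ D : L, (B (H + 2 • D) (H + 2 • D) = 4 ∨ B (H + 2 • D) (H + 2 • D) = -4) →
      (B (H + 2 • D) (H + 2 • D) = 4 ∨ B (H + 2 • D) (H + 2 • D) = -4) ∧
        2 ∣ B H (H + 2 • D) ∧
        Ideal.span {z : ℤ | ∃ x ∈ primClosure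
            (Submodule.span ℤ ({H, H + 2 • D} : Set L)), z = B H x} = ⊤) ∧
    (∀ h₁ : L, (B h₁ h₁ = 4 ∨ B h₁ h₁ = -4) → 2 ∣ B H h₁ →
      Ideal.span {z : ℤ | ∃ x ∈ primClosure (Submodule.span ℤ ({H, h₁} : Set L)),
        z = B H x} = ⊤ →
      ∃ D ∈ primClosure (Submodule.span ℤ ({H, h₁} : Set L)), h₁ = H + 2 • D) :=
  main_lemma_equivalence_general B hsym heven H hH hprim
end

section
/- Let L be an even lattice, H, h₁ ∈ L with H² = 8, h₁² = ±4, H·h₁ ≡ 0 mod 2, and suppose H is primitive in L and not congruent mod 2S to an element making H·S ⊂ 2ℤ, where S is the primitive closure of ℤH + ℤh₁. If H·S = ℤ, then in the 𝔽₂-vector space S/2S the images of H and h₁ are linearly dependent and both nonzero; consequently h₁ ≡ H mod 2S. -/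
open Submodule

theorem exists_not_dvd_of_span_eq_top {R : Type*} [CommRing R] {T : Set R}
    (hT : Ideal.span T = ⊤) {p : R} (hp : ¬IsUnit p) : ∃ z ∈ T, ¬p ∣ z := by
  by_contra! h
  have hle : Ideal.span T ≤ Ideal.span {p} :=
    Ideal.span_le.2 fun z hz => Ideal.mem_span_singleton.2 (h z hz)
  rw [hT, top_le_iff, Ideal.span_singleton_eq_top] at hle
  exact hp hle

section

variable {L : Type*} [AddCommGroup L]

theorem not_exists_eq_two_smul_of_not_eight_dvd (B : L →ₗ[ℤ] L →ₗ[ℤ] ℤ)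
    (heven : ∀ x : L, 2 ∣ B x x) {x : L} (hx : ¬8 ∣ B x x) : ¬∃ s : L, x = 2 • s := by
  rintro ⟨s, rfl⟩
  obtain ⟨t, ht⟩ := heven s
  exact hx ⟨t, by simp only [map_nsmul, LinearMap.smul_apply, ht, nsmul_eq_mul]; ring⟩

theorem exists_notMem_two_smul_mem_of_mem_primClosure (φ : L →ₗ[ℤ] ℤ) {M : Submodule ℤ L}
    (hM : ∀ z ∈ M, 2 ∣ φ z) {x : L} (hx : x ∈ primClosure M) (hodd : ¬2 ∣ φ x) :
    ∃ y ∉ M, 2 • y ∈ M := by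
  obtain ⟨n, hn, hnx⟩ := hx
  induction h : n.natAbs using Nat.strong_induction_on generalizing n with
  | _ k ih =>
    have h2n : 2 ∣ n * φ x := by simpa using hM _ hnx
    obtain ⟨m, rfl⟩ := (Int.prime_two.dvd_mul.1 h2n).resolve_right hodd
    by_cases hm : m • x ∈ M
    · exact ih m.natAbs (by omega) m (by rintro rfl; simp at hn) hm rfl
    · exact ⟨m • x, hm, by rwa [mul_smul, two_smul, ← two_nsmul] at hnx⟩

theorem exists_add_eq_two_smul_of_two_smul_mem_span_pair [IsAddTorsionFree L] {u v y : L}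
    (hu : ¬∃ s, u = 2 • s) (hv : ¬∃ s, v = 2 • s) (hy : y ∉ span ℤ {u, v})
    (h2y : 2 • y ∈ span ℤ {u, v}) : ∃ s, u + v = 2 • s := by
  obtain ⟨a, b, hab⟩ := mem_span_pair.1 h2y
  obtain ⟨a', ha⟩ := Int.even_or_odd' a
  obtain ⟨b', hb⟩ := Int.even_or_odd' b
  -- the relation `a • u + b • v ∈ 2L` reduced mod 2
  have hz : (a - 2 * a') • u + (b - 2 * b') • v = 2 • (y - a' • u - b' • v) := by
    calc _ = a • u + b • v - 2 • (a' • u + b' • v) := by module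
      _ = 2 • (y - a' • u - b' • v) := by rw [hab]; module
  rcases ha with rfl | rfl <;> rcases hb with rfl | rfl <;>
    simp only [sub_self, add_sub_cancel_left, zero_smul, one_smul, zero_add, add_zero] at hz
  · have hz0 : y - a' • u - b' • v = 0 := by simpa using hz.symm
    exact absurd (mem_span_pair.2 ⟨a', b', by rwa [sub_sub, sub_eq_zero, eq_comm] at hz0⟩) hy
  · exact (hv ⟨_, hz⟩).elim
  · exact (hu ⟨_, hz⟩).elim
  · exact ⟨_, hz⟩

end

theorem images_mod_two_dependent_general
    {L : Type*} [AddCommGroup L] [Module ℤ L] [Module.Free ℤ L]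
    (B : L →ₗ[ℤ] L →ₗ[ℤ] ℤ)
    (heven : ∀ x : L, 2 ∣ B x x)
    (H h₁ : L) (hH : B H H = 8)
    (hsq : B h₁ h₁ = 4 ∨ B h₁ h₁ = -4)
    (hpar : 2 ∣ B H h₁)
    (hprim : ∀ (n : ℤ) (x : L), H = n • x → IsUnit n)
    (hideal : Ideal.span {z : ℤ | ∃ x ∈ primClosure (Submodule.span ℤ ({H, h₁} : Set L)),
        z = B H x} = ⊤) :
    (¬ ∃ s ∈ primClosure (Submodule.span ℤ ({H, h₁} : Set L)), H = 2 • s) ∧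
    (¬ ∃ s ∈ primClosure (Submodule.span ℤ ({H, h₁} : Set L)), h₁ = 2 • s) ∧
    (∃ s ∈ primClosure (Submodule.span ℤ ({H, h₁} : Set L)), h₁ - H = 2 • s) := by
  -- identify the given `ℤ`-action with the group's own one, used by the lemmas above
  obtain rfl : ‹Module ℤ L› = AddCommGroup.toIntModule L := Subsingleton.elim _ _
  have : IsAddTorsionFree L := Module.isTorsionFree_int_iff_isAddTorsionFree.1 inferInstance
  have hH2 : ¬∃ s : L, H = 2 • s := fun ⟨s, hs⟩ =>
    Int.prime_two.not_isUnit (hprim 2 s (by rw [hs, two_nsmul, two_smul]))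
  have hh₁2 : ¬∃ s : L, h₁ = 2 • s :=
    not_exists_eq_two_smul_of_not_eight_dvd B heven (by omega)
  have hM : ∀ z ∈ span ℤ {H, h₁}, 2 ∣ B H z := by
    intro z hz
    obtain ⟨a, b, rfl⟩ := mem_span_pair.1 hz
    obtain ⟨c, hc⟩ := hpar
    exact ⟨4 * a + b * c, by simp only [map_add, map_smul, hH, hc, smul_eq_mul]; ring⟩
  obtain ⟨_, ⟨x, hx, rfl⟩, hodd⟩ := exists_not_dvd_of_span_eq_top hideal Int.prime_two.not_isUnit
  obtain ⟨y, hy, h2y⟩ := exists_notMem_two_smul_mem_of_mem_primClosure (B H) hM hx hodd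
  obtain ⟨s, hs⟩ := exists_add_eq_two_smul_of_two_smul_mem_span_pair hH2 hh₁2 hy h2y
  have hsH : h₁ - H = 2 • (s - H) := by rw [nsmul_sub, ← hs]; abel
  refine ⟨fun ⟨t, _, ht⟩ => hH2 ⟨t, ht⟩, fun ⟨t, _, ht⟩ => hh₁2 ⟨t, ht⟩,
    s - H, ⟨2, two_ne_zero, ?_⟩, hsH⟩
  rw [two_smul, ← two_nsmul, ← hsH]
  exact sub_mem (subset_span (by simp)) (subset_span (by simp))

/-- With `H² = 8`, `h₁² = ±4`, `H·h₁` even, `H` primitive and `H·S = ℤ`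
(`S` the primitive closure of `ℤH + ℤh₁`), the images of `H` and `h₁` in `S/2S` are
both nonzero and linearly dependent; consequently `h₁ ≡ H mod 2S`. -/
theorem images_mod_two_dependent
    {L : Type*} [AddCommGroup L] [Module ℤ L] [Module.Free ℤ L] [Module.Finite ℤ L]
    (B : L →ₗ[ℤ] L →ₗ[ℤ] ℤ)
    (hsym : ∀ x y : L, B x y = B y x)
    (heven : ∀ x : L, 2 ∣ B x x)
    (H h₁ : L) (hH : B H H = 8)
    (hsq : B h₁ h₁ = 4 ∨ B h₁ h₁ = -4)
    (hpar : 2 ∣ B H h₁)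
    (hprim : ∀ (n : ℤ) (x : L), H = n • x → IsUnit n)
    (hideal : Ideal.span {z : ℤ | ∃ x ∈ primClosure (Submodule.span ℤ ({H, h₁} : Set L)),
        z = B H x} = ⊤) :
    (¬ ∃ s ∈ primClosure (Submodule.span ℤ ({H, h₁} : Set L)), H = 2 • s) ∧
    (¬ ∃ s ∈ primClosure (Submodule.span ℤ ({H, h₁} : Set L)), h₁ = 2 • s) ∧
    (∃ s ∈ primClosure (Submodule.span ℤ ({H, h₁} : Set L)), h₁ - H = 2 • s) :=
  images_mod_two_dependent_general B heven H h₁ hH hsq hpar hprim hideal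
end

section
/- Let L be a rank-2 even lattice containing elements H with H² = 8 and h₁ with h₁² = −4 and H·h₁ ≡ 0 mod 2, such that L is generated over ℚ by H and h₁ and H·L = ℤ. If every h ∈ L satisfying h² = ±4 and H·h ≡ 0 mod 2 has h² = −4, then L contains no element δ with δ² = −2. -/
lemma aux_dvd (m X : ℤ) (h1 : m ∣ 4*X) (h2 : (2:ℤ) ∣ X) (h3 : ¬ (4:ℤ) ∣ m) : m ∣ X := by
  have cop : ∀ d : ℤ, ¬ (2:ℤ) ∣ d → IsCoprime d (4:ℤ) := by
    intro d hd
    have h2' : IsCoprime d (2:ℤ) := by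
      rw [Int.isCoprime_iff_gcd_eq_one]
      have hg2 : (Int.gcd d 2 : ℤ) ∣ (2:ℤ) := Int.gcd_dvd_right d 2
      have hg2' : Int.gcd d 2 ∣ 2 := by
        have := Int.ofNat_dvd_right.mp hg2
        simpa using this
      rcases (Nat.dvd_prime Nat.prime_two).mp hg2' with h | h
      · exact h
      · exfalso
        apply hd
        have := Int.gcd_dvd_left (a := d) (b := 2)
        rw [h] at this
        exact_mod_cast this
    have h4 : IsCoprime d ((2:ℤ)^2) := h2'.pow_right
    norm_num at h4
    exact h4
  rcases Int.even_or_odd m with hm | hm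
  · obtain ⟨d, hd⟩ := hm
    have hmd : m = 2*d := by omega
    have hdo : ¬ (2:ℤ) ∣ d := by
      rintro ⟨e, he⟩; exact h3 ⟨e, by omega⟩
    obtain ⟨Y, hY⟩ := h2
    have hd4Y : d ∣ 4*Y := by
      obtain ⟨k, hk⟩ := h1
      rw [hmd, mul_assoc] at hk
      exact ⟨k, by omega⟩
    have : d ∣ Y := (cop d hdo).dvd_of_dvd_mul_left hd4Y
    obtain ⟨k, hk⟩ := this
    exact ⟨k, by rw [hY, hk, hmd]; ring⟩
  · have hdo : ¬ (2:ℤ) ∣ m := by rintro ⟨e,he⟩; obtain ⟨k,hk⟩ := hm; omega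
    exact (cop m hdo).dvd_of_dvd_mul_left h1

/-- Let `L` be a rank-2 even lattice containing `H` with `H² = 8` and `h₁`
with `h₁² = −4`, `H·h₁ ≡ 0 mod 2`, such that `L` is generated over `ℚ` by `H, h₁` and
`H·L = ℤ`. If every `h ∈ L` with `h² = ±4` and `H·h` even has `h² = −4`, then `L`
contains no element `δ` with `δ² = −2`. -/
theorem no_minus_two_vectors
    {L : Type*} [AddCommGroup L] [Module ℤ L] [Module.Free ℤ L] [Module.Finite ℤ L]
    (hrk : Module.rank ℤ L = 2)
    (B : L →ₗ[ℤ] L →ₗ[ℤ] ℤ)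
    (hsym : ∀ x y : L, B x y = B y x)
    (heven : ∀ x : L, 2 ∣ B x x)
    (H h₁ : L) (hH : B H H = 8) (hh₁ : B h₁ h₁ = -4) (hpar : 2 ∣ B H h₁)
    (hgen : ∀ x : L, ∃ n : ℤ, n ≠ 0 ∧ n • x ∈ Submodule.span ℤ ({H, h₁} : Set L))
    (hideal : Ideal.span (Set.range fun x : L => B H x) = ⊤)
    (honly : ∀ h : L, (B h h = 4 ∨ B h h = -4) → 2 ∣ B H h → B h h = -4) :
    ∀ δ : L, B δ δ ≠ -2 := by
  intro δ hδ
  obtain ⟨u, hu⟩ := hpar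
  -- the key quadratic identity valid for all x ∈ L
  have key : ∀ x : L, (u^2+8) * B x x
      = (B H x)^2 + u*(B H x)*(B h₁ x) - 2*(B h₁ x)^2 := by
    intro x
    obtain ⟨n, hn0, hmem⟩ := hgen x
    rw [Submodule.mem_span_pair] at hmem
    obtain ⟨p, r, hpr⟩ := hmem
    have e1 := congrArg (B H) hpr
    simp at e1
    rw [hH, hu] at e1
    have e2 := congrArg (B h₁) hpr
    simp at e2
    rw [hsym h₁ H, hu, hh₁] at e2
    have e3 := congrArg (fun z => B z x) hpr
    simp at e3
    have main : n^2 * ((u^2+8) * B x x)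
        = n^2 * ((B H x)^2 + u*(B H x)*(B h₁ x) - 2*(B h₁ x)^2) := by
      linear_combination (n * B H x + n * (B h₁ x) * u - p*u^2 + 2*r*u) * e1
        + (u^2*r + 4*u*p - 2*n*(B h₁ x)) * e2 - ((u^2+8)*n) * e3
    exact mul_left_cancel₀ (pow_ne_zero 2 hn0) main
  -- extract w with B H w = 1
  have hle : Ideal.span (Set.range fun x : L => B H x) ≤ LinearMap.range (B H) :=
    Ideal.span_le.mpr (by rintro y ⟨x, rfl⟩; exact LinearMap.mem_range_self _ x)
  have hone : (1:ℤ) ∈ LinearMap.range (B H) := hle (by rw [hideal]; exact Submodule.mem_top)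
  obtain ⟨w, hw⟩ := hone
  set s := B H δ with hs
  set c := B h₁ δ with hc
  set b := B h₁ w with hb
  -- key identities
  have kδ : (u^2+8) * (-2) = s^2 + u*s*c - 2*c^2 := by
    have := key δ; rw [hδ] at this; exact this
  have kw : (u^2+8) * B w w = 1 + u*b - 2*b^2 := by
    have := key w; rw [hw] at this; linarith [this]
  -- X is even
  have hXeven : (2:ℤ) ∣ 1 + u*b - 2*b^2 := by
    obtain ⟨g, hg⟩ := heven w
    exact ⟨(u^2+8)*g, by rw [← kw, hg]; ring⟩
  -- u is odd
  have huodd : ¬ (2:ℤ) ∣ u := by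
    rintro ⟨v, hv⟩
    obtain ⟨Y, hY⟩ := hXeven
    have : (1:ℤ) = 2*(Y - v*b + b^2) := by rw [hv] at hY; linarith [hY]
    omega
  -- the three generators and the gcd argument
  set α := c - s*b with hα
  set β := 2*u - 8*b with hβ
  set γ := 4 + 2*u*b with hγ
  set g2 := (Int.gcd β γ : ℤ) with hg2
  set g1 := (Int.gcd α g2 : ℤ) with hg1
  have hg1α : g1 ∣ α := Int.gcd_dvd_left α g2
  have hg1g2 : g1 ∣ g2 := Int.gcd_dvd_right α g2
  have hg1β : g1 ∣ β := hg1g2.trans (Int.gcd_dvd_left β γ)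
  have hg1γ : g1 ∣ γ := hg1g2.trans (Int.gcd_dvd_right β γ)
  have h4X : g1 ∣ 4*(1 + u*b - 2*b^2) := by
    have : 4*(1 + u*b - 2*b^2) = b*β + γ := by rw [hβ, hγ]; ring
    rw [this]
    exact dvd_add (hg1β.mul_left b) hg1γ
  have hn4 : ¬ (4:ℤ) ∣ g1 := by
    rintro ⟨e, he⟩
    obtain ⟨f, hf⟩ := hg1β
    apply huodd
    have hf' : 2*u - 8*b = 4*(e*f) := by
      rw [← hβ, hf, he]; ring
    exact ⟨e*f + 2*b, by omega⟩
  have hg1X : g1 ∣ 1 + u*b - 2*b^2 := aux_dvd g1 _ h4X hXeven hn4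
  have hg1sX : g1 ∣ s*(1 + u*b - 2*b^2) := hg1X.mul_left s
  obtain ⟨k, hk⟩ := hg1sX
  -- Bezout
  have bez1 : g1 = α * Int.gcdA α g2 + g2 * Int.gcdB α g2 := Int.gcd_eq_gcd_ab α g2
  have bez2 : g2 = β * Int.gcdA β γ + γ * Int.gcdB β γ := Int.gcd_eq_gcd_ab β γ
  set A1 := Int.gcdA α g2
  set A2 := Int.gcdB α g2
  set A3 := Int.gcdA β γ
  set A4 := Int.gcdB β γ
  have hsol : α * (A1*k) + β * (A3*A2*k) + γ * (A4*A2*k) = s*(1 + u*b - 2*b^2) := by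
    linear_combination (-k) * bez1 + (-(A2*k)) * bez2 - hk
  have hsol' : (c - s*b) * (A1*k) + (2*u - 8*b) * (A3*A2*k) + (4 + 2*u*b) * (A4*A2*k)
      = s*(1 + u*b - 2*b^2) := by
    rw [← hα, ← hβ, ← hγ]; exact hsol
  -- construct h
  set x := u - 2*b + A1*k with hx
  set z := A3*A2*k with hz
  set t := -(A4*A2*k) with ht
  set y := 2*c - (x*s + 8*z + 2*u*t) with hy
  set h : L := x • δ + y • w + z • H + t • h₁ with hh
  have hBHh : B H h = 2*c := by
    rw [hh]
    have expand : B H (x • δ + y • w + z • H + t • h₁)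
        = x * B H δ + y * B H w + z * B H H + t * B H h₁ := by
      simp
    rw [expand, hH, hw, hu, ← hs, hy]; ring
  have hBh₁h : B h₁ h = s + u*c := by
    rw [hh]
    have expand : B h₁ (x • δ + y • w + z • H + t • h₁)
        = x * B h₁ δ + y * B h₁ w + z * B h₁ H + t * B h₁ h₁ := by
      simp
    rw [expand, hh₁, hsym h₁ H, hu, ← hc, ← hb, hy, hx, hz, ht]
    linear_combination hsol'
  have hqh : B h h = 4 := by
    have hE : ((u:ℤ)^2+8) ≠ 0 := by positivity
    apply mul_left_cancel₀ hE
    rw [key h, hBHh, hBh₁h]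
    linear_combination 2 * kδ
  have := honly h (Or.inl hqh) ⟨c, hBHh⟩
  rw [hqh] at this
  norm_num at this
end
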